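/- Let (Σ_A^+, σ_A) be a one-sided subshift of finite type with metric d_θ for some θ ∈ (0,1), let α ∈ (0,1], and let φ : Σ_A^+ → ℝ be α-Hölder continuous with respect to d_θ. Then for all a₀ > 0 and b₀ > 0 there exists a constant C > 0, depending only on a₀, b₀, θ, α, and φ, such that for every s ∈ ℂ with |Re s| ≤ a₀ and |Im s| ≥ b₀, every m ≥ 1, and every admissible word ω of length m, ‖ L_{sφ}^m χ_ω ‖_{C^{0,α}} ≤ C · |Im s| · sup_{y ∈ C_ω} e^{(Re s) · S_mφ(y)}. -/

import Mathlib

open Filter Topology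

variable {S : Type*}

/-- The carrier set of the one-sided subshift of finite type defined by the
transition matrix `A`: sequences `x : ℕ → S` with `A (x i) (x (i+1)) = 1` for all `i`. -/
def SFT (A : S → S → Bool) : Set (ℕ → S) :=
  {x | ∀ i : ℕ, A (x i) (x (i + 1)) = true}

/-- The left-shift map `σ_A`. -/
def shift (x : ℕ → S) : ℕ → S := fun n => x (n + 1)

/-- An admissible word of length `n`, encoded as `ω : Fin n → S` with
`A(ω_i, ω_{i+1}) = 1` for `0 ≤ i < n - 1`. -/
def AdmissibleWord (A : S → S → Bool) {n : ℕ} (ω : Fin n → S) : Prop :=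
  ∀ i : Fin n, ∀ h : i.val + 1 < n, A (ω i) (ω ⟨i.val + 1, h⟩) = true

/-- The cylinder set `C_ω` of a word `ω`. -/
def cylinder (A : S → S → Bool) {n : ℕ} (ω : Fin n → S) : Set (ℕ → S) :=
  {x | x ∈ SFT A ∧ ∀ i : Fin n, x i.val = ω i}

/-- Concatenation `ωx`: prepend the word `ω` to the sequence `x`. -/
def wordConcat {n : ℕ} (ω : Fin n → S) (x : ℕ → S) : ℕ → S :=
  fun i => if h : i < n then ω ⟨i, h⟩ else x (i - n)

/-- Prepend a single symbol to a sequence. -/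
def scons (j : S) (x : ℕ → S) : ℕ → S := fun i => Nat.casesOn i j x

/-- The periodic extension `ω^∞ = ωωω⋯` of a word of positive length. -/
def periodicExt {n : ℕ} (hn : 0 < n) (ω : Fin n → S) : ℕ → S :=
  fun i => ω ⟨i % n, Nat.mod_lt i hn⟩

/-- The set of fixed points of `σ_A^n` in the subshift. -/
def perSet (A : S → S → Bool) (n : ℕ) : Set (ℕ → S) :=
  {x | x ∈ SFT A ∧ shift^[n] x = x}

/-- Birkhoff sum of a real-valued function under the shift. -/
def birkhoffR (φ : (ℕ → S) → ℝ) (n : ℕ) (x : ℕ → S) : ℝ :=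
  ∑ j ∈ Finset.range n, φ (shift^[j] x)

/-- Birkhoff sum of a complex-valued function under the shift. -/
noncomputable def birkhoffC (ψ : (ℕ → S) → ℂ) (n : ℕ) (x : ℕ → S) : ℂ :=
  ∑ j ∈ Finset.range n, ψ (shift^[j] x)

-- The metric `d_θ`: `d_θ(x, y) = θ^m` where `m` is the smallest index with
-- `x_m ≠ y_m`, and `d_θ(x, x) = 0`.
open Classical in
noncomputable def dtheta (θ : ℝ) (x y : ℕ → S) : ℝ :=
  if h : x = y then 0
  else θ ^ Nat.find (show ∃ m, x m ≠ y m by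
    by_contra hc
    push_neg at hc
    exact h (funext hc))

/-- The Ruelle operator `L_ψ` evaluated on the subshift:
`(L_ψ u)(x) = Σ_{y ∈ σ_A^{-1}(x)} e^{ψ(y)} u(y)`. -/
noncomputable def ruelle [Fintype S] (A : S → S → Bool) (ψ : (ℕ → S) → ℂ)
    (u : (ℕ → S) → ℂ) : (ℕ → S) → ℂ :=
  fun x => ∑ j : S,
    if A j (x 0) = true then Complex.exp (ψ (scons j x)) * u (scons j x) else 0

/-- The characteristic function `χ_ω` of the cylinder `C_ω`. -/
noncomputable def chi (A : S → S → Bool) {n : ℕ} (ω : Fin n → S) : (ℕ → S) → ℂ :=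
  (cylinder A ω).indicator 1

open Classical in
/-- The finite set of admissible words of length `n`. -/
noncomputable def admissibleWords (A : S → S → Bool) [Fintype S] (n : ℕ) :
    Finset (Fin n → S) :=
  Finset.univ.filter fun ω => AdmissibleWord A ω

/-- The Hölder seminorm `|u|_α` (with respect to `d_θ`, on the subshift). -/
noncomputable def holderSeminormC (A : S → S → Bool) (θ α : ℝ)
    (u : (ℕ → S) → ℂ) : ℝ :=
  sSup {c | ∃ x ∈ SFT A, ∃ y ∈ SFT A, x ≠ y ∧
    c = ‖u x - u y‖ / dtheta θ x y ^ α}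

/-- The supremum norm `‖u‖_∞` over the subshift. -/
noncomputable def supNormC (A : S → S → Bool) (u : (ℕ → S) → ℂ) : ℝ :=
  sSup ((fun x => ‖u x‖) '' SFT A)

/-- The Hölder norm `‖u‖_{C^{0,α}} = |u|_α + ‖u‖_∞`. -/
noncomputable def holderNormC (A : S → S → Bool) (θ α : ℝ)
    (u : (ℕ → S) → ℂ) : ℝ :=
  holderSeminormC A θ α u + supNormC A u

/-- The Hölder seminorm of a real-valued function. -/
noncomputable def holderSeminormR (A : S → S → Bool) (θ α : ℝ)
    (φ : (ℕ → S) → ℝ) : ℝ :=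
  sSup {c | ∃ x ∈ SFT A, ∃ y ∈ SFT A, x ≠ y ∧
    c = |φ x - φ y| / dtheta θ x y ^ α}

/-- The supremum norm of a real-valued function over the subshift. -/
noncomputable def supNormR (A : S → S → Bool) (φ : (ℕ → S) → ℝ) : ℝ :=
  sSup ((fun x => |φ x|) '' SFT A)

/-- The Hölder norm of a real-valued function. -/
noncomputable def holderNormR (A : S → S → Bool) (θ α : ℝ)
    (φ : (ℕ → S) → ℝ) : ℝ :=
  holderSeminormR A θ α φ + supNormR A φ

/-- The operator norm of `L_ψ^k` on `C^{0,α}((Σ_A^+, d_θ), ℂ)`. -/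
noncomputable def ruelleOpNorm (A : S → S → Bool) [Fintype S]
    (θ α : ℝ) (ψ : (ℕ → S) → ℂ) (k : ℕ) : ℝ :=
  sSup {c | ∃ u : (ℕ → S) → ℂ, holderNormC A θ α u ≤ 1 ∧
    c = holderNormC A θ α ((ruelle A ψ)^[k] u)}

/-- `Z_m(aφ) = Σ_{|ω|=m} sup_{y ∈ C_ω} e^{a S_mφ(y)}`. -/
noncomputable def Zword (A : S → S → Bool) [Fintype S] (φ : (ℕ → S) → ℝ)
    (a : ℝ) (m : ℕ) : ℝ :=
  ∑ ω ∈ admissibleWords A m,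
    sSup ((fun y => Real.exp (a * birkhoffR φ m y)) '' cylinder A ω)

/-- `P(aφ) = limsup_{m → ∞} (1/m) log Z_m(aφ)`. -/
noncomputable def pressureA (A : S → S → Bool) [Fintype S] (φ : (ℕ → S) → ℝ)
    (a : ℝ) : ℝ :=
  Filter.limsup (fun m : ℕ => Real.log (Zword A φ a m) / m) Filter.atTop


section Aux

variable {S : Type*}

/-! ### Basic lemmas on `shift`, `scons`, `wordConcat`, `SFT` -/

lemma shift_scons (j : S) (x : ℕ → S) : shift (scons j x) = x := rfl

lemma scons_zero (j : S) (x : ℕ → S) : scons j x 0 = j := rfl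

lemma scons_succ (j : S) (x : ℕ → S) (i : ℕ) : scons j x (i + 1) = x i := rfl

lemma shift_iterate_apply (x : ℕ → S) (j i : ℕ) : shift^[j] x i = x (i + j) := by
  induction j generalizing x with
  | zero => rfl
  | succ k ih =>
    rw [Function.iterate_succ_apply, ih]
    show x (i + k + 1) = x (i + (k + 1))
    ring_nf

lemma SFT_shift {A : S → S → Bool} {x : ℕ → S} (hx : x ∈ SFT A) : shift x ∈ SFT A :=
  fun i => hx (i + 1)

lemma SFT_shift_iterate {A : S → S → Bool} {x : ℕ → S} (hx : x ∈ SFT A) (j : ℕ) :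
    shift^[j] x ∈ SFT A := by
  induction j with
  | zero => exact hx
  | succ k ih => rw [Function.iterate_succ_apply']; exact SFT_shift ih

lemma wordConcat_zero (w : Fin 0 → S) (x : ℕ → S) : wordConcat w x = x := by
  funext i
  simp [wordConcat]

lemma wordConcat_lt {m : ℕ} (w : Fin m → S) (x : ℕ → S) {i : ℕ} (h : i < m) :
    wordConcat w x i = w ⟨i, h⟩ := dif_pos h

lemma wordConcat_ge {m : ℕ} (w : Fin m → S) (x : ℕ → S) {i : ℕ} (h : m ≤ i) :
    wordConcat w x i = x (i - m) := dif_neg (not_lt.2 h)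

lemma wordConcat_cons {m : ℕ} (j : S) (w : Fin m → S) (x : ℕ → S) :
    wordConcat (Fin.cons j w) x = scons j (wordConcat w x) := by
  funext i
  cases i with
  | zero =>
    rw [scons_zero, wordConcat_lt _ _ (Nat.succ_pos m)]
    rfl
  | succ i =>
    rw [scons_succ]
    by_cases h : i < m
    · rw [wordConcat_lt _ _ h, wordConcat_lt _ _ (by omega : i + 1 < m + 1)]
      rfl
    · rw [wordConcat_ge _ _ (by omega), wordConcat_ge _ _ (by omega)]
      congr 1
      omega

lemma scons_SFT {A : S → S → Bool} (j : S) (x : ℕ → S) :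
    scons j x ∈ SFT A ↔ (A j (x 0) = true ∧ x ∈ SFT A) := by
  constructor
  · intro h
    exact ⟨h 0, fun i => h (i + 1)⟩
  · rintro ⟨h0, h⟩ i
    cases i with
    | zero => exact h0
    | succ k => exact h k

/-- Admissibility of a word `w` prepended to `x` (internal + junction condition). -/
def wadm (A : S → S → Bool) (m : ℕ) (w : Fin m → S) (x : ℕ → S) : Prop :=
  ∀ i < m, A (wordConcat w x i) (wordConcat w x (i + 1)) = true

lemma wordConcat_SFT {A : S → S → Bool} {m : ℕ} (w : Fin m → S) (x : ℕ → S) :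
    wordConcat w x ∈ SFT A ↔ (wadm A m w x ∧ x ∈ SFT A) := by
  constructor
  · intro h
    refine ⟨fun i hi => h i, fun i => ?_⟩
    have := h (i + m)
    rwa [wordConcat_ge _ _ (by omega), wordConcat_ge _ _ (by omega),
      (by omega : i + m - m = i), (by omega : i + m + 1 - m = i + 1)] at this
  · rintro ⟨hw, hx⟩ i
    by_cases h : i < m
    · exact hw i h
    · rw [wordConcat_ge _ _ (by omega), wordConcat_ge _ _ (by omega),
        (by omega : i + 1 - m = i - m + 1)]
      exact hx (i - m)

lemma wadm_succ {A : S → S → Bool} {m : ℕ} (j : S) (w : Fin m → S) (x : ℕ → S) :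
    wadm A (m + 1) (Fin.cons j w) x ↔
      (A j (wordConcat w x 0) = true ∧ wadm A m w x) := by
  rw [wadm]
  rw [wordConcat_cons]
  constructor
  · intro h
    exact ⟨h 0 (Nat.succ_pos m), fun i hi => h (i + 1) (by omega)⟩
  · rintro ⟨h0, h⟩ i hi
    cases i with
    | zero => exact h0
    | succ k => exact h k (by omega)

lemma birkhoffC_scons (ψ : (ℕ → S) → ℂ) (m : ℕ) (j : S) (x : ℕ → S) :
    birkhoffC ψ (m + 1) (scons j x) = ψ (scons j x) + birkhoffC ψ m x := by
  rw [birkhoffC, Finset.sum_range_succ', birkhoffC]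
  have h0 : ∀ k, shift^[k+1] (scons j x) = shift^[k] x := fun k => by
    rw [Function.iterate_succ_apply, shift_scons]
  simp only [h0, Function.iterate_zero, id_eq]
  exact add_comm _ _

end Aux

section RuelleFormula

variable {S : Type*}

open Classical in
lemma ruelle_iter_formula [Fintype S] (A : S → S → Bool) (ψ : (ℕ → S) → ℂ)
    (m : ℕ) (u : (ℕ → S) → ℂ) (x : ℕ → S) :
    (ruelle A ψ)^[m] u x = ∑ w : Fin m → S,
      if wadm A m w x then
        Complex.exp (birkhoffC ψ m (wordConcat w x)) * u (wordConcat w x)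
      else 0 := by
  induction m generalizing u with
  | zero =>
    rw [Fintype.sum_unique]
    have h0 : wadm A 0 (default : Fin 0 → S) x := fun i hi => by omega
    rw [if_pos h0, wordConcat_zero]
    simp [birkhoffC]
  | succ m ih =>
    rw [Function.iterate_succ_apply, ih]
    rw [← Equiv.sum_comp (Fin.consEquiv (fun _ : Fin (m + 1) => S))]
    rw [Fintype.sum_prod_type]
    rw [Finset.sum_comm]
    apply Finset.sum_congr rfl
    intro w _
    have hexp : ∀ j : S, (if wadm A m w x then
        Complex.exp (birkhoffC ψ m (wordConcat w x)) *
          (if A j (wordConcat w x 0) = true then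
            Complex.exp (ψ (scons j (wordConcat w x))) * u (scons j (wordConcat w x))
          else 0) else 0) =
        (if wadm A (m+1) (Fin.cons j w) x then
          Complex.exp (birkhoffC ψ (m+1) (wordConcat (Fin.cons j w) x)) *
            u (wordConcat (Fin.cons j w) x) else 0) := by
      intro j
      rw [wordConcat_cons, wadm_succ, birkhoffC_scons]
      by_cases h1 : wadm A m w x
      · by_cases h2 : A j (wordConcat w x 0) = true
        · rw [if_pos h1, if_pos h2, if_pos ⟨h2, h1⟩, Complex.exp_add]
          ring
        · rw [if_pos h1, if_neg h2, if_neg (by tauto), mul_zero]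
      · rw [if_neg h1, if_neg (by tauto)]
    calc (if wadm A m w x then
            Complex.exp (birkhoffC ψ m (wordConcat w x)) *
              (ruelle A ψ u) (wordConcat w x) else 0)
        = ∑ j : S, (if wadm A m w x then
            Complex.exp (birkhoffC ψ m (wordConcat w x)) *
              (if A j (wordConcat w x 0) = true then
                Complex.exp (ψ (scons j (wordConcat w x))) * u (scons j (wordConcat w x))
              else 0) else 0) := by
          rw [ruelle]
          split
          · rw [Finset.mul_sum]
          · rw [Finset.sum_const_zero]
      _ = _ := by
          apply Finset.sum_congr rfl
          intro j _
          rw [hexp j]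
          rfl

lemma wordConcat_mem_cylinder {A : S → S → Bool} {m : ℕ} {ω : Fin m → S} {x : ℕ → S}
    (hx : x ∈ SFT A) (hw : wadm A m ω x) : wordConcat ω x ∈ cylinder A ω := by
  refine ⟨(wordConcat_SFT ω x).2 ⟨hw, hx⟩, fun i => ?_⟩
  rw [wordConcat_lt _ _ i.isLt]

open Classical in
lemma ruelle_iter_chi [Fintype S] (A : S → S → Bool) (ψ : (ℕ → S) → ℂ)
    {m : ℕ} (ω : Fin m → S) (x : ℕ → S) (hx : x ∈ SFT A) :
    (ruelle A ψ)^[m] (chi A ω) x =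
      if wadm A m ω x then Complex.exp (birkhoffC ψ m (wordConcat ω x)) else 0 := by
  rw [ruelle_iter_formula]
  rw [Fintype.sum_eq_single ω]
  · by_cases hw : wadm A m ω x
    · rw [if_pos hw, if_pos hw, chi,
        Set.indicator_of_mem (wordConcat_mem_cylinder hx hw), Pi.one_apply, mul_one]
    · rw [if_neg hw, if_neg hw]
  · intro w hwne
    have hnot : wordConcat w x ∉ cylinder A ω := by
      intro hmem
      apply hwne
      funext i
      have := hmem.2 i
      rwa [wordConcat_lt _ _ i.isLt, Fin.eta] at this
    rw [chi, Set.indicator_of_notMem hnot, mul_zero, ite_self]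

lemma birkhoffC_ofReal (s : ℂ) (φ : (ℕ → S) → ℝ) (m : ℕ) (x : ℕ → S) :
    birkhoffC (fun y => s * (φ y : ℂ)) m x = s * (birkhoffR φ m x : ℂ) := by
  rw [birkhoffC, birkhoffR]
  push_cast
  rw [Finset.mul_sum]

end RuelleFormula

section DthetaAux

variable {S : Type*}

lemma dtheta_nonneg {θ : ℝ} (hθ : 0 ≤ θ) (x y : ℕ → S) : 0 ≤ dtheta θ x y := by
  rw [dtheta]
  split
  · exact le_refl 0
  · exact pow_nonneg hθ _

open Classical in
lemma dtheta_le {θ : ℝ} (hθ0 : 0 ≤ θ) (hθ1 : θ ≤ 1) {x y : ℕ → S} (k : ℕ)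
    (h : ∀ i < k, x i = y i) : dtheta θ x y ≤ θ ^ k := by
  rw [dtheta]
  split
  · exact pow_nonneg hθ0 k
  · apply pow_le_pow_of_le_one hθ0 hθ1
    rw [Nat.le_find_iff]
    intro i hi
    exact not_not.2 (h i hi)

open Classical in
lemma dtheta_spec {θ : ℝ} {x y : ℕ → S} (hxy : x ≠ y) :
    ∃ n : ℕ, dtheta θ x y = θ ^ n ∧ (∀ i < n, x i = y i) := by
  rw [dtheta, dif_neg hxy]
  exact ⟨_, rfl, fun i hi => not_not.1 (Nat.find_min _ hi)⟩

lemma pow_rpow_comm {θ α : ℝ} (hθ0 : 0 ≤ θ) (n : ℕ) :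
    ((θ ^ n : ℝ) : ℝ) ^ α = (θ ^ α) ^ n := by
  rw [← Real.rpow_natCast θ n, ← Real.rpow_natCast (θ ^ α) n,
    ← Real.rpow_mul hθ0, ← Real.rpow_mul hθ0, mul_comm]

end DthetaAux

section ExpBound

/-- Mean value bound: `|e^{sX} - e^{sY}| ≤ |s| R |X - Y|` when
`e^{Re s · X}, e^{Re s · Y} ≤ R`. -/
lemma exp_line_diff_bound (s : ℂ) (X Y R : ℝ)
    (hX : Real.exp (s.re * X) ≤ R) (hY : Real.exp (s.re * Y) ≤ R) :
    ‖Complex.exp (s * X) - Complex.exp (s * Y)‖ ≤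
      ‖s‖ * R * |X - Y| := by
  set g : ℝ → ℂ := fun t => s * Y + t • (s * ((X : ℂ) - Y)) with hg
  set f : ℝ → ℂ := fun t => Complex.exp (g t) with hf
  have hgd : ∀ t : ℝ, HasDerivAt g (s * ((X : ℂ) - Y)) t := by
    intro t
    exact ((hasDerivAt_id t).smul_const (s * ((X : ℂ) - Y))).const_add (s * Y) |>.congr_deriv
      (by rw [one_smul])
  have hfd : ∀ t : ℝ, HasDerivAt f (Complex.exp (g t) * (s * ((X : ℂ) - Y))) t :=
    fun t => (hgd t).cexp
  have key := norm_image_sub_le_of_norm_deriv_le_segment'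
    (f := f) (f' := fun t => Complex.exp (g t) * (s * ((X : ℂ) - Y)))
    (a := 0) (b := 1) (C := ‖s‖ * R * |X - Y|)
    (fun t _ => (hfd t).hasDerivWithinAt) ?_ 1 (Set.right_mem_Icc.2 zero_le_one)
  · have hf1 : f 1 = Complex.exp (s * X) := by
      rw [hf]; simp only [hg]
      norm_num
      ring_nf
    have hf0 : f 0 = Complex.exp (s * Y) := by
      rw [hf]; simp only [hg]
      norm_num
    rw [hf1, hf0] at key
    calc ‖Complex.exp (s * X) - Complex.exp (s * Y)‖
        = ‖Complex.exp (s * X) - Complex.exp (s * Y)‖ := rfl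
      _ ≤ ‖s‖ * R * |X - Y| * (1 - 0) := key
      _ = ‖s‖ * R * |X - Y| := by ring
  · intro t ht
    have hRe : (g t).re = s.re * Y + t * (s.re * (X - Y)) := by
      simp [hg, Complex.add_re, Complex.mul_re, Complex.smul_re]
    have hexpgt : Real.exp ((g t).re) ≤ R := by
      rw [hRe]
      have h1 : s.re * Y + t * (s.re * (X - Y)) ≤ max (s.re * X) (s.re * Y) := by
        rcases le_total (s.re * Y) (s.re * X) with h | h
        · calc s.re * Y + t * (s.re * (X - Y))
              ≤ s.re * X := by nlinarith [ht.1, ht.2]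
            _ ≤ _ := le_max_left _ _
        · calc s.re * Y + t * (s.re * (X - Y))
              ≤ s.re * Y := by nlinarith [ht.1, ht.2]
            _ ≤ _ := le_max_right _ _
      calc Real.exp (s.re * Y + t * (s.re * (X - Y)))
          ≤ Real.exp (max (s.re * X) (s.re * Y)) := Real.exp_le_exp.2 h1
        _ ≤ R := by
            rcases max_cases (s.re * X) (s.re * Y) with ⟨h, _⟩ | ⟨h, _⟩ <;> rw [h]
            · exact hX
            · exact hY
    have hR0 : 0 ≤ R := le_trans (Real.exp_pos _).le hexpgt
    calc ‖Complex.exp (g t) * (s * ((X : ℂ) - Y))‖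
        = Real.exp ((g t).re) * (‖s‖ * ‖(X : ℂ) - Y‖) := by
          rw [norm_mul, Complex.norm_exp,
            norm_mul]
      _ = Real.exp ((g t).re) * (‖s‖ * |X - Y|) := by
          rw [← Complex.ofReal_sub, Complex.norm_real, Real.norm_eq_abs]
      _ ≤ R * (‖s‖ * |X - Y|) := by
          apply mul_le_mul_of_nonneg_right hexpgt
          positivity
      _ = ‖s‖ * R * |X - Y| := by ring

end ExpBound


section MainAux

variable {S : Type*}

lemma wadm_congr_zero {A : S → S → Bool} {m : ℕ} (hm : 1 ≤ m) (ω : Fin m → S)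
    {x y : ℕ → S} (h0 : x 0 = y 0) : wadm A m ω x ↔ wadm A m ω y := by
  have hcoord : ∀ i ≤ m, wordConcat ω x i = wordConcat ω y i := by
    intro i hi
    by_cases h : i < m
    · rw [wordConcat_lt _ _ h, wordConcat_lt _ _ h]
    · have hi' : i = m := by omega
      subst hi'
      rw [wordConcat_ge _ _ le_rfl, wordConcat_ge _ _ le_rfl, Nat.sub_self]
      exact h0
  constructor
  · intro h i hi
    rw [← hcoord i (by omega), ← hcoord (i + 1) (by omega)]
    exact h i hi
  · intro h i hi
    rw [hcoord i (by omega), hcoord (i + 1) (by omega)]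
    exact h i hi

lemma birkhoff_diff_bound {A : S → S → Bool} {θ α : ℝ} (hθ0 : 0 < θ) (hθ1 : θ < 1)
    (hα0 : 0 < α)
    {φ : (ℕ → S) → ℝ} {c : ℝ}
    (hc : ∀ x ∈ SFT A, ∀ y ∈ SFT A, |φ x - φ y| ≤ c * dtheta θ x y ^ α)
    {m n : ℕ} (ω : Fin m → S) {x y : ℕ → S}
    (hx : x ∈ SFT A) (hy : y ∈ SFT A)
    (hwx : wadm A m ω x) (hwy : wadm A m ω y)
    (hag : ∀ i < n, x i = y i) :
    |birkhoffR φ m (wordConcat ω x) - birkhoffR φ m (wordConcat ω y)| ≤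
      max c 0 * (θ ^ α / (1 - θ ^ α)) * (θ ^ α) ^ n := by
  set t : ℝ := θ ^ α with ht
  have ht0 : 0 < t := Real.rpow_pos_of_pos hθ0 α
  have ht1 : t < 1 := Real.rpow_lt_one hθ0.le hθ1 hα0
  set cp : ℝ := max c 0 with hcp
  have hcp0 : 0 ≤ cp := le_max_right c 0
  have hVx : wordConcat ω x ∈ SFT A := (wordConcat_SFT ω x).2 ⟨hwx, hx⟩
  have hVy : wordConcat ω y ∈ SFT A := (wordConcat_SFT ω y).2 ⟨hwy, hy⟩
  have hVag : ∀ l < m + n, wordConcat ω x l = wordConcat ω y l := by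
    intro l hl
    by_cases h : l < m
    · rw [wordConcat_lt _ _ h, wordConcat_lt _ _ h]
    · rw [wordConcat_ge _ _ (by omega), wordConcat_ge _ _ (by omega)]
      exact hag (l - m) (by omega)
  have hterm : ∀ j ∈ Finset.range m,
      |φ (shift^[j] (wordConcat ω x)) - φ (shift^[j] (wordConcat ω y))| ≤
        cp * (t ^ (m - j) * t ^ n) := by
    intro j hj
    rw [Finset.mem_range] at hj
    have hu : shift^[j] (wordConcat ω x) ∈ SFT A := SFT_shift_iterate hVx j
    have hv : shift^[j] (wordConcat ω y) ∈ SFT A := SFT_shift_iterate hVy j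
    have hagj : ∀ i < (m - j) + n, shift^[j] (wordConcat ω x) i = shift^[j] (wordConcat ω y) i := by
      intro i hi
      rw [shift_iterate_apply, shift_iterate_apply]
      exact hVag (i + j) (by omega)
    have hd : dtheta θ (shift^[j] (wordConcat ω x)) (shift^[j] (wordConcat ω y)) ≤
        θ ^ ((m - j) + n) := dtheta_le hθ0.le hθ1.le _ hagj
    have hd0 : 0 ≤ dtheta θ (shift^[j] (wordConcat ω x)) (shift^[j] (wordConcat ω y)) :=
      dtheta_nonneg hθ0.le _ _
    have hdα : dtheta θ (shift^[j] (wordConcat ω x)) (shift^[j] (wordConcat ω y)) ^ α ≤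
        (θ ^ ((m - j) + n) : ℝ) ^ α := Real.rpow_le_rpow hd0 hd hα0.le
    calc |φ (shift^[j] (wordConcat ω x)) - φ (shift^[j] (wordConcat ω y))|
        ≤ c * dtheta θ (shift^[j] (wordConcat ω x)) (shift^[j] (wordConcat ω y)) ^ α :=
          hc _ hu _ hv
      _ ≤ cp * dtheta θ (shift^[j] (wordConcat ω x)) (shift^[j] (wordConcat ω y)) ^ α :=
          mul_le_mul_of_nonneg_right (le_max_left c 0) (Real.rpow_nonneg hd0 α)
      _ ≤ cp * ((θ ^ ((m - j) + n) : ℝ) ^ α) := mul_le_mul_of_nonneg_left hdα hcp0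
      _ = cp * (t ^ (m - j) * t ^ n) := by
          rw [pow_rpow_comm hθ0.le, pow_add]
  have hgs : ∑ j ∈ Finset.range m, t ^ (m - j) ≤ t / (1 - t) := by
    have h1 : ∑ j ∈ Finset.range m, t ^ (m - j) = ∑ j ∈ Finset.range m, t ^ (j + 1) := by
      rw [← Finset.sum_range_reflect]
      apply Finset.sum_congr rfl
      intro j hj
      rw [Finset.mem_range] at hj
      congr 1
      omega
    have h3 : ∑ j ∈ Finset.range m, t ^ j ≤ 1 / (1 - t) := by
      rw [geom_sum_eq (ne_of_lt ht1) m]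
      rw [show (t ^ m - 1) / (t - 1) = (1 - t ^ m) / (1 - t) by
        rw [← neg_div_neg_eq]; ring_nf]
      have h4 : (1 : ℝ) - t ^ m ≤ 1 := by nlinarith [pow_nonneg ht0.le m]
      exact div_le_div_of_nonneg_right h4 (by linarith) |>.trans_eq rfl
    have h2 : ∑ j ∈ Finset.range m, t ^ (j + 1) = t * ∑ j ∈ Finset.range m, t ^ j := by
      rw [Finset.mul_sum]
      apply Finset.sum_congr rfl
      intro j _
      ring
    rw [h1, h2]
    calc t * ∑ j ∈ Finset.range m, t ^ j ≤ t * (1 / (1 - t)) :=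
        mul_le_mul_of_nonneg_left h3 ht0.le
      _ = t / (1 - t) := by ring
  calc |birkhoffR φ m (wordConcat ω x) - birkhoffR φ m (wordConcat ω y)|
      = |∑ j ∈ Finset.range m,
          (φ (shift^[j] (wordConcat ω x)) - φ (shift^[j] (wordConcat ω y)))| := by
        rw [birkhoffR, birkhoffR, Finset.sum_sub_distrib]
    _ ≤ ∑ j ∈ Finset.range m,
          |φ (shift^[j] (wordConcat ω x)) - φ (shift^[j] (wordConcat ω y))| :=
        Finset.abs_sum_le_sum_abs _ _
    _ ≤ ∑ j ∈ Finset.range m, cp * (t ^ (m - j) * t ^ n) := Finset.sum_le_sum hterm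
    _ = cp * t ^ n * ∑ j ∈ Finset.range m, t ^ (m - j) := by
        rw [Finset.mul_sum]
        apply Finset.sum_congr rfl
        intro j _
        ring
    _ ≤ cp * t ^ n * (t / (1 - t)) := by
        apply mul_le_mul_of_nonneg_left hgs
        exact mul_nonneg hcp0 (pow_nonneg ht0.le n)
    _ = cp * (t / (1 - t)) * t ^ n := by ring

end MainAux

set_option maxHeartbeats 1000000 in
/-- Let `φ` be `α`-Hölder with respect to `d_θ`.  For all
`a₀ > 0`, `b₀ > 0` there is `C > 0` (depending only on `a₀`, `b₀`, `θ`, `α`, `φ`)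
such that for every `s ∈ ℂ` with `|Re s| ≤ a₀` and `|Im s| ≥ b₀`, every `m ≥ 1`, and
every admissible word `ω` of length `m`,
`‖L_{sφ}^m χ_ω‖_{C^{0,α}} ≤ C · |Im s| · sup_{y ∈ C_ω} e^{(Re s) S_mφ(y)}`. -/
theorem holder_norm_ruelle_iterate_indicator_bound
    [Fintype S] [Nonempty S]
    (A : S → S → Bool) (θ : ℝ) (hθ : θ ∈ Set.Ioo (0 : ℝ) 1)
    (α : ℝ) (hα : α ∈ Set.Ioc (0 : ℝ) 1)
    (φ : (ℕ → S) → ℝ)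
    (hφ : ∃ c : ℝ, ∀ x ∈ SFT A, ∀ y ∈ SFT A, |φ x - φ y| ≤ c * dtheta θ x y ^ α) :
    ∀ a₀ > (0 : ℝ), ∀ b₀ > (0 : ℝ), ∃ C > (0 : ℝ), ∀ s : ℂ,
      |s.re| ≤ a₀ → b₀ ≤ |s.im| →
      ∀ m : ℕ, 1 ≤ m → ∀ ω : Fin m → S, AdmissibleWord A ω →
        holderNormC A θ α ((ruelle A (fun x => s * (φ x : ℂ)))^[m] (chi A ω)) ≤
          C * |s.im| *
            sSup ((fun y => Real.exp (s.re * birkhoffR φ m y)) '' cylinder A ω) := by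
  classical
  obtain ⟨hθ0, hθ1⟩ := hθ
  obtain ⟨hα0, hα1⟩ := hα
  obtain ⟨c, hc⟩ := hφ
  -- a uniform bound for `φ` on the subshift
  have hKex : ∃ K : ℝ, ∀ y ∈ SFT A, |φ y| ≤ K := by
    by_cases hne : (SFT A).Nonempty
    · obtain ⟨x₀, hx₀⟩ := hne
      refine ⟨|φ x₀| + max c 0, fun y hy => ?_⟩
      have h1 := hc y hy x₀ hx₀
      have hd0 : 0 ≤ dtheta θ y x₀ := dtheta_nonneg hθ0.le y x₀
      have hd1 : dtheta θ y x₀ ≤ 1 := by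
        simpa using dtheta_le hθ0.le hθ1.le 0 (fun i hi => by omega)
      have hda : (0:ℝ) ≤ dtheta θ y x₀ ^ α := Real.rpow_nonneg hd0 α
      have hd1' : dtheta θ y x₀ ^ α ≤ 1 := Real.rpow_le_one hd0 hd1 hα0.le
      have h2 : |φ y - φ x₀| ≤ max c 0 := by
        calc |φ y - φ x₀| ≤ c * dtheta θ y x₀ ^ α := h1
          _ ≤ max c 0 * dtheta θ y x₀ ^ α :=
              mul_le_mul_of_nonneg_right (le_max_left c 0) hda
          _ ≤ max c 0 * 1 := mul_le_mul_of_nonneg_left hd1' (le_max_right c 0)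
          _ = max c 0 := mul_one _
      calc |φ y| = |(φ y - φ x₀) + φ x₀| := by ring_nf
        _ ≤ |φ y - φ x₀| + |φ x₀| := abs_add_le _ _
        _ ≤ max c 0 + |φ x₀| := by linarith
        _ = |φ x₀| + max c 0 := by ring
    · exact ⟨0, fun y hy => absurd ⟨y, hy⟩ hne⟩
  obtain ⟨K, hK⟩ := hKex
  intro a₀ ha₀ b₀ hb₀
  set cp : ℝ := max c 0 with hcp
  have hcp0 : 0 ≤ cp := le_max_right c 0
  set t : ℝ := θ ^ α with ht
  have ht0 : 0 < t := Real.rpow_pos_of_pos hθ0 α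
  have ht1 : t < 1 := Real.rpow_lt_one hθ0.le hθ1 hα0
  set c₁ : ℝ := cp * (t / (1 - t)) with hc₁
  have hc₁0 : 0 ≤ c₁ := mul_nonneg hcp0 (div_nonneg ht0.le (by linarith))
  set Ksem : ℝ := (a₀ / b₀ + 1) * c₁ + 2 / b₀ with hKsem
  have hKsem0 : 0 ≤ Ksem := by
    have : 0 ≤ (a₀ / b₀ + 1) * c₁ := mul_nonneg (by positivity) hc₁0
    have : 0 ≤ 2 / b₀ := by positivity
    rw [hKsem]; linarith
  refine ⟨Ksem + 1 / b₀ + 1, by positivity, ?_⟩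
  intro s hsre hsim m hm ω hω
  set ψ : (ℕ → S) → ℂ := fun x => s * (φ x : ℂ) with hψ
  set F := (ruelle A ψ)^[m] (chi A ω) with hF
  set M := sSup ((fun y => Real.exp (s.re * birkhoffR φ m y)) '' cylinder A ω) with hM
  have hb : 0 < |s.im| := lt_of_lt_of_le hb₀ hsim
  have hMbdd : BddAbove ((fun y => Real.exp (s.re * birkhoffR φ m y)) '' cylinder A ω) := by
    refine ⟨Real.exp (a₀ * (m * K)), ?_⟩
    rintro r ⟨y, hy, rfl⟩
    apply Real.exp_le_exp.2
    have hby : |birkhoffR φ m y| ≤ m * K := by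
      rw [birkhoffR]
      calc |∑ j ∈ Finset.range m, φ (shift^[j] y)|
          ≤ ∑ j ∈ Finset.range m, |φ (shift^[j] y)| := Finset.abs_sum_le_sum_abs _ _
        _ ≤ ∑ _j ∈ Finset.range m, K :=
            Finset.sum_le_sum fun j _ => hK _ (SFT_shift_iterate hy.1 j)
        _ = m * K := by rw [Finset.sum_const, Finset.card_range, nsmul_eq_mul]
    calc s.re * birkhoffR φ m y ≤ |s.re * birkhoffR φ m y| := le_abs_self _
      _ = |s.re| * |birkhoffR φ m y| := abs_mul _ _
      _ ≤ a₀ * (m * K) := mul_le_mul hsre hby (abs_nonneg _) ha₀.le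
  have hM0 : 0 ≤ M := by
    rw [hM]
    exact Real.sSup_nonneg (by rintro r ⟨y, hy, rfl⟩; exact (Real.exp_pos _).le)
  have hMle : ∀ y ∈ cylinder A ω, Real.exp (s.re * birkhoffR φ m y) ≤ M :=
    fun y hy => le_csSup hMbdd ⟨y, hy, rfl⟩
  have hFval : ∀ x ∈ SFT A, F x =
      if wadm A m ω x then Complex.exp (s * (birkhoffR φ m (wordConcat ω x) : ℂ)) else 0 := by
    intro x hx
    rw [hF, ruelle_iter_chi A ψ ω x hx]
    by_cases hw : wadm A m ω x
    · rw [if_pos hw, if_pos hw, hψ, birkhoffC_ofReal]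
    · rw [if_neg hw, if_neg hw]
  have habs : ∀ x ∈ SFT A, ‖F x‖ ≤ M := by
    intro x hx
    rw [hFval x hx]
    split
    · rename_i hw
      rw [Complex.norm_exp]
      have hre : (s * (birkhoffR φ m (wordConcat ω x) : ℂ)).re =
          s.re * birkhoffR φ m (wordConcat ω x) := by
        simp [Complex.mul_re]
      rw [hre]
      exact hMle _ (wordConcat_mem_cylinder hx hw)
    · simpa using hM0
  have hsup : supNormC A F ≤ M := by
    apply Real.sSup_le _ hM0
    rintro r ⟨x, hx, rfl⟩
    exact habs x hx
  have hs_abs : ‖s‖ ≤ (a₀ / b₀ + 1) * |s.im| := by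
    have hdb : a₀ = (a₀ / b₀) * b₀ := by field_simp
    have hdb0 : 0 ≤ a₀ / b₀ := by positivity
    calc ‖s‖ ≤ |s.re| + |s.im| := Complex.norm_le_abs_re_add_abs_im s
      _ ≤ a₀ + |s.im| := by linarith
      _ ≤ (a₀ / b₀) * |s.im| + |s.im| := by nlinarith
      _ = (a₀ / b₀ + 1) * |s.im| := by ring
  have hsem : holderSeminormC A θ α F ≤ Ksem * |s.im| * M := by
    apply Real.sSup_le _ (mul_nonneg (mul_nonneg hKsem0 (abs_nonneg _)) hM0)
    rintro r ⟨x, hx, y, hy, hxy, rfl⟩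
    obtain ⟨n, hdn, hag⟩ := dtheta_spec (θ := θ) hxy
    rw [hdn, pow_rpow_comm hθ0.le, ← ht]
    have htn : (0:ℝ) < t ^ n := pow_pos ht0 n
    rw [div_le_iff₀ htn]
    by_cases h0 : x 0 = y 0
    · have hwiff : wadm A m ω x ↔ wadm A m ω y := wadm_congr_zero hm ω h0
      by_cases hw : wadm A m ω x
      · have hXM : Real.exp (s.re * birkhoffR φ m (wordConcat ω x)) ≤ M :=
          hMle _ (wordConcat_mem_cylinder hx hw)
        have hYM : Real.exp (s.re * birkhoffR φ m (wordConcat ω y)) ≤ M :=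
          hMle _ (wordConcat_mem_cylinder hy (hwiff.1 hw))
        have hFx : F x = Complex.exp (s * (birkhoffR φ m (wordConcat ω x) : ℂ)) := by
          rw [hFval x hx, if_pos hw]
        have hFy : F y = Complex.exp (s * (birkhoffR φ m (wordConcat ω y) : ℂ)) := by
          rw [hFval y hy, if_pos (hwiff.1 hw)]
        have hXY : |birkhoffR φ m (wordConcat ω x) - birkhoffR φ m (wordConcat ω y)| ≤
            c₁ * t ^ n := by
          have := birkhoff_diff_bound hθ0 hθ1 hα0 hc ω hx hy hw (hwiff.1 hw) hag
          rw [hc₁]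
          rw [ht]
          exact this
        have hE := exp_line_diff_bound s (birkhoffR φ m (wordConcat ω x))
          (birkhoffR φ m (wordConcat ω y)) M hXM hYM
        have h1 : (a₀ / b₀ + 1) * c₁ ≤ Ksem := by
          rw [hKsem]
          have : 0 ≤ 2 / b₀ := by positivity
          linarith
        calc ‖F x - F y‖
            = ‖Complex.exp (s * (birkhoffR φ m (wordConcat ω x) : ℂ)) -
                Complex.exp (s * (birkhoffR φ m (wordConcat ω y) : ℂ))‖ := by rw [hFx, hFy]
          _ ≤ ‖s‖ * M *
                |birkhoffR φ m (wordConcat ω x) - birkhoffR φ m (wordConcat ω y)| := hE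
          _ ≤ ((a₀ / b₀ + 1) * |s.im|) * M * (c₁ * t ^ n) := by
              apply mul_le_mul (mul_le_mul_of_nonneg_right hs_abs hM0) hXY (abs_nonneg _)
              exact mul_nonneg (by positivity) hM0
          _ = ((a₀ / b₀ + 1) * c₁) * |s.im| * M * t ^ n := by ring
          _ ≤ Ksem * |s.im| * M * t ^ n := by
              apply mul_le_mul_of_nonneg_right _ (pow_nonneg ht0.le n)
              apply mul_le_mul_of_nonneg_right _ hM0
              exact mul_le_mul_of_nonneg_right h1 (abs_nonneg _)
      · have hFx : F x = 0 := by rw [hFval x hx, if_neg hw]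
        have hFy : F y = 0 := by rw [hFval y hy, if_neg (fun h => hw (hwiff.2 h))]
        rw [hFx, hFy, sub_zero, norm_zero]
        have h00 : 0 ≤ Ksem * |s.im| * M := mul_nonneg (mul_nonneg hKsem0 (abs_nonneg _)) hM0
        exact mul_nonneg h00 (pow_nonneg ht0.le n)
    · have hn0 : n = 0 := by
        by_contra hn
        exact h0 (hag 0 (by omega))
      rw [hn0, pow_zero, mul_one]
      have h2b : (2:ℝ) ≤ Ksem * |s.im| := by
        have h2b1 : (2:ℝ) = (2 / b₀) * b₀ := by field_simp
        have h2b2 : (2 / b₀) * b₀ ≤ (2 / b₀) * |s.im| :=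
          mul_le_mul_of_nonneg_left hsim (by positivity)
        have h2b3 : (2 / b₀) * |s.im| ≤ Ksem * |s.im| := by
          apply mul_le_mul_of_nonneg_right _ (abs_nonneg _)
          rw [hKsem]
          have : 0 ≤ (a₀ / b₀ + 1) * c₁ := mul_nonneg (by positivity) hc₁0
          linarith
        calc (2:ℝ) = (2 / b₀) * b₀ := h2b1
          _ ≤ (2 / b₀) * |s.im| := h2b2
          _ ≤ Ksem * |s.im| := h2b3
      calc ‖F x - F y‖
          = ‖F x - F y‖ := rfl
        _ ≤ ‖F x‖ + ‖F y‖ := norm_sub_le _ _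
        _ ≤ M + M := add_le_add (habs x hx) (habs y hy)
        _ = 2 * M := by ring
        _ ≤ Ksem * |s.im| * M := by nlinarith [hM0, h2b]
  have hMb : M ≤ (1 / b₀) * |s.im| * M := by
    have h1 : (1:ℝ) ≤ (1 / b₀) * |s.im| := by
      have : (1:ℝ) = (1 / b₀) * b₀ := by field_simp
      nlinarith [mul_le_mul_of_nonneg_left hsim (by positivity : (0:ℝ) ≤ 1 / b₀)]
    nlinarith
  rw [holderNormC]
  calc holderSeminormC A θ α F + supNormC A F
      ≤ Ksem * |s.im| * M + (1 / b₀) * |s.im| * M := add_le_add hsem (le_trans hsup hMb)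
    _ ≤ (Ksem + 1 / b₀ + 1) * |s.im| * M := by nlinarith [mul_nonneg (abs_nonneg s.im) hM0]
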